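/- arXiv:2511.14822 — 4 statements merged into one kernel-verified Lean document; each statement's English description precedes it below -/
import Mathlib

section
/- (Weak Hohenberg–Kohn theorem.) Let v, v' ∈ V and ρ ∈ V*. Suppose there exist a pure ground state Γ of ι(v)+W with ι*(Γ) = ρ and a pure ground state Γ' of ι(v')+W with ι*(Γ') = ρ. Then every pure ground state of ι(v)+W whose density is ρ is also a ground state of ι(v')+W, and conversely every pure ground state of ι(v')+W whose density is ρ is also a ground state of ι(v)+W. -/
open Filter Topology

noncomputable section

variable {V H : Type*}
  [AddCommGroup V] [Module ℝ V]
  [NormedAddCommGroup H] [InnerProductSpace ℂ H]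

/-- The real expectation value `⟨ψ, T ψ⟩` of an operator `T` in the vector `ψ`. -/
def expectation (T : H →ₗ[ℂ] H) (ψ : H) : ℝ := (inner ℂ ψ (T ψ) : ℂ).re

/-- The ground state energy of the Hamiltonian `ι v + W`. -/
def energy (ι : V →ₗ[ℝ] (H →ₗ[ℂ] H)) (W : H →ₗ[ℂ] H) (v : V) : ℝ :=
  sInf {r : ℝ | ∃ ψ : H, ‖ψ‖ = 1 ∧ r = expectation (ι v + W) ψ}

/-- The density `ι*(|ψ⟩⟨ψ|)` of the pure state given by the unit vector `ψ`,
as an element of the dual space `V*`. -/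
def pureDensity (ι : V →ₗ[ℝ] (H →ₗ[ℂ] H)) (ψ : H) : Module.Dual ℝ V where
  toFun v := expectation (ι v) ψ
  map_add' v w := by simp [expectation, inner_add_right]
  map_smul' c v := by
    simp only [map_smul, LinearMap.smul_apply, expectation, RingHom.id_apply, smul_eq_mul]
    rw [← algebraMap_smul ℂ c ((ι v) ψ), Complex.coe_algebraMap, inner_smul_right]
    simp

/-- An ensemble state: a positive semidefinite operator of unit trace. -/
def IsEnsembleState (Γ : H →ₗ[ℂ] H) : Prop :=
  Γ.IsSymmetric ∧ (∀ x : H, 0 ≤ (inner ℂ x (Γ x) : ℂ).re) ∧ LinearMap.trace ℂ H Γ = 1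

/-- The density `ι*(Γ)` of a state `Γ`, `v ↦ Tr(Γ ι(v))`, as an element of `V*`. -/
def traceDensity (ι : V →ₗ[ℝ] (H →ₗ[ℂ] H)) (Γ : H →ₗ[ℂ] H) : Module.Dual ℝ V where
  toFun v := (LinearMap.trace ℂ H (ι v ∘ₗ Γ)).re
  map_add' v w := by simp [map_add, LinearMap.add_comp]
  map_smul' c v := by
    simp only [map_smul, RingHom.id_apply, smul_eq_mul]
    rw [← algebraMap_smul ℂ c (ι v), LinearMap.smul_comp, map_smul, Complex.coe_algebraMap]
    simp

/-- The pure (Levy–Lieb) universal functional `F_p`. -/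
def Fp (ι : V →ₗ[ℝ] (H →ₗ[ℂ] H)) (W : H →ₗ[ℂ] H) (ρ : Module.Dual ℝ V) : ℝ :=
  sInf {r : ℝ | ∃ ψ : H, ‖ψ‖ = 1 ∧ pureDensity ι ψ = ρ ∧ r = expectation W ψ}

/-- The ensemble (Lieb/Valone) universal functional `F_e`. -/
def Fe (ι : V →ₗ[ℝ] (H →ₗ[ℂ] H)) (W : H →ₗ[ℂ] H) (ρ : Module.Dual ℝ V) : ℝ :=
  sInf {r : ℝ | ∃ Γ : H →ₗ[ℂ] H, IsEnsembleState Γ ∧ traceDensity ι Γ = ρ ∧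
    r = (LinearMap.trace ℂ H (W ∘ₗ Γ)).re}

/-- The weight space of a functional `α ∈ V*`. -/
def weightSpace (ι : V →ₗ[ℝ] (H →ₗ[ℂ] H)) (α : Module.Dual ℝ V) : Submodule ℂ H where
  carrier := {ψ : H | ∀ v : V, ι v ψ = (α v : ℂ) • ψ}
  add_mem' := by
    intro a b ha hb v
    rw [map_add, ha v, hb v, smul_add]
  zero_mem' := by intro v; simp
  smul_mem' := by
    intro c x hx v
    rw [LinearMap.map_smul, hx v, smul_comm]

/-- The set of weights of an abelian functional theory. -/
def weights (ι : V →ₗ[ℝ] (H →ₗ[ℂ] H)) : Set (Module.Dual ℝ V) :=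
  {α : Module.Dual ℝ V | weightSpace ι α ≠ ⊥}

/-- The derivative of the density map along the set of pure states at `|Ψ⟩⟨Ψ|`,
applied to the tangent vector `φ ⊥ Ψ`: the functional `v ↦ 2 Re⟨φ, ι(v)Ψ⟩`. -/
def derivDensity (ι : V →ₗ[ℝ] (H →ₗ[ℂ] H)) (Ψ φ : H) : Module.Dual ℝ V where
  toFun v := 2 * (inner ℂ φ (ι v Ψ) : ℂ).re
  map_add' v w := by simp [inner_add_right]; ring
  map_smul' c v := by
    simp only [map_smul, LinearMap.smul_apply, RingHom.id_apply, smul_eq_mul]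
    rw [← algebraMap_smul ℂ c ((ι v) Ψ), Complex.coe_algebraMap, inner_smul_right]
    simp; ring

/-- `ρ` is a relative interior point of the convex set `C` (i.e. an interior point
of `C` within its affine span): every point of `C` lies on a segment inside `C`
having `ρ` in its (open) interior. -/
def IsRelInterior {M : Type*} [AddCommGroup M] [Module ℝ M] (C : Set M) (ρ : M) : Prop :=
  ρ ∈ C ∧ ∀ σ ∈ C, ∃ τ ∈ C, ∃ t : ℝ, 0 < t ∧ t < 1 ∧ ρ = t • σ + (1 - t) • τ

/-- Strong orthogonality: componentwise orthogonality in every weight space. -/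
def StronglyOrthogonal [FiniteDimensional ℂ H] (ι : V →ₗ[ℝ] (H →ₗ[ℂ] H)) (Φ Φ' : H) : Prop :=
  ∀ α : Module.Dual ℝ V, weightSpace ι α ≠ ⊥ →
    (inner ℂ (Submodule.orthogonalProjectionOnto (weightSpace ι α) Φ)
        (Submodule.orthogonalProjectionOnto (weightSpace ι α) Φ') : ℂ) = 0

/-- The `k`-convex hull of a set. -/
def convk {M : Type*} [AddCommGroup M] [Module ℝ M] (k : ℕ) (X : Set M) : Set M :=
  {ρ : M | ∃ (t : Fin k → ℝ) (x : Fin k → M),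
    (∀ i, 0 ≤ t i) ∧ (∑ i, t i) = 1 ∧ (∀ i, x i ∈ X) ∧ (∑ i, t i • x i) = ρ}

/-- The operator `A ⊗ id` on `H ⊗ ℂᵏ ≅ H ⊕ ⋯ ⊕ H` (k summands). -/
def opBar (k : ℕ) (A : H →ₗ[ℂ] H) :
    (PiLp 2 fun _ : Fin k => H) →ₗ[ℂ] (PiLp 2 fun _ : Fin k => H) where
  toFun x := WithLp.toLp 2 (fun i => A (x i))
  map_add' x y := by ext i; simp [PiLp.add_apply]
  map_smul' c x := by ext i; simp [PiLp.smul_apply]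

/-- The potential map `v ↦ ι(v) ⊗ id` of the `k`-convexified functional theory. -/
def potBar (k : ℕ) (ι : V →ₗ[ℝ] (H →ₗ[ℂ] H)) :
    V →ₗ[ℝ] ((PiLp 2 fun _ : Fin k => H) →ₗ[ℂ] (PiLp 2 fun _ : Fin k => H)) where
  toFun v := opBar k (ι v)
  map_add' v w := by
    apply LinearMap.ext; intro x; ext i
    simp [opBar, map_add]
  map_smul' c v := by
    apply LinearMap.ext; intro x; ext i
    simp [opBar, map_smul]

/-- The subspace of potentials mapped to real multiples of the identity operator. -/
def scalarPart (ι : V →ₗ[ℝ] (H →ₗ[ℂ] H)) : Submodule ℝ V where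
  carrier := {v : V | ∃ c : ℝ, ι v = c • (LinearMap.id : H →ₗ[ℂ] H)}
  add_mem' := by
    rintro a b ⟨c, hc⟩ ⟨d, hd⟩
    exact ⟨c + d, by rw [map_add, hc, hd, add_smul]⟩
  zero_mem' := ⟨0, by simp⟩
  smul_mem' := by
    rintro a v ⟨c, hc⟩
    exact ⟨a * c, by rw [map_smul, hc, smul_smul]⟩

/-! Testing the variational principle for `ι v' + W` on a ground state of `ι v + W` of density `ρ`
gives `E(v') ≤ E(v) + ρ(v') - ρ(v)`, as the two Hamiltonians differ by a potential term whose
expectation is read off the density. A ground state of `ι v' + W` of density `ρ` gives the reverse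
inequality, so every ground state of either Hamiltonian with density `ρ` attains the ground energy
of the other. -/

lemma expectation_add (T S : H →ₗ[ℂ] H) (ψ : H) :
    expectation (T + S) ψ = expectation T ψ + expectation S ψ := by
  simp only [expectation, LinearMap.add_apply, inner_add_right, Complex.add_re]

lemma neg_opNorm_le_expectation [FiniteDimensional ℂ H] (T : H →ₗ[ℂ] H) {ψ : H}
    (hψ : ‖ψ‖ = 1) : -‖LinearMap.toContinuousLinearMap T‖ ≤ expectation T ψ := by
  refine neg_le_of_abs_le ((Complex.abs_re_le_norm _).trans ((norm_inner_le_norm _ _).trans ?_))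
  simpa [hψ] using (LinearMap.toContinuousLinearMap T).le_opNorm ψ

lemma energy_le_expectation [FiniteDimensional ℂ H] (ι : V →ₗ[ℝ] (H →ₗ[ℂ] H))
    (W : H →ₗ[ℂ] H) (v : V) {ψ : H} (hψ : ‖ψ‖ = 1) :
    energy ι W v ≤ expectation (ι v + W) ψ :=
  -- boundedness below is what keeps `energy` from being the junk value of `sInf`
  csInf_le ⟨_, by rintro r ⟨φ, hφ, rfl⟩; exact neg_opNorm_le_expectation _ hφ⟩ ⟨ψ, hψ, rfl⟩

@[simp]
lemma pureDensity_apply (ι : V →ₗ[ℝ] (H →ₗ[ℂ] H)) (ψ : H) (v : V) :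
    pureDensity ι ψ v = expectation (ι v) ψ :=
  rfl

lemma expectation_potential_add_eq (ι : V →ₗ[ℝ] (H →ₗ[ℂ] H)) (W : H →ₗ[ℂ] H)
    (v v' : V) (ψ : H) :
    expectation (ι v' + W) ψ
      = expectation (ι v + W) ψ + (pureDensity ι ψ v' - pureDensity ι ψ v) := by
  simp only [expectation_add, pureDensity_apply]
  ring

lemma energy_le_energy_add_of_ground_state [FiniteDimensional ℂ H]
    (ι : V →ₗ[ℝ] (H →ₗ[ℂ] H)) (W : H →ₗ[ℂ] H) {v : V} (v' : V) {ψ : H} (hψ : ‖ψ‖ = 1)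
    (hground : expectation (ι v + W) ψ = energy ι W v) :
    energy ι W v' ≤ energy ι W v + (pureDensity ι ψ v' - pureDensity ι ψ v) := by
  rw [← hground, ← expectation_potential_add_eq]
  exact energy_le_expectation ι W v' hψ

theorem weak_hohenberg_kohn_general [FiniteDimensional ℂ H]
    (ι : V →ₗ[ℝ] (H →ₗ[ℂ] H)) (W : H →ₗ[ℂ] H)
    (v v' : V) (ρ : Module.Dual ℝ V)
    (h : ∃ ψ : H, ‖ψ‖ = 1 ∧ expectation (ι v + W) ψ = energy ι W v ∧ pureDensity ι ψ = ρ)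
    (h' : ∃ ψ : H, ‖ψ‖ = 1 ∧ expectation (ι v' + W) ψ = energy ι W v' ∧ pureDensity ι ψ = ρ) :
    (∀ ψ : H, ‖ψ‖ = 1 → expectation (ι v + W) ψ = energy ι W v → pureDensity ι ψ = ρ →
      expectation (ι v' + W) ψ = energy ι W v') ∧
    (∀ ψ : H, ‖ψ‖ = 1 → expectation (ι v' + W) ψ = energy ι W v' → pureDensity ι ψ = ρ →
      expectation (ι v + W) ψ = energy ι W v) := by
  obtain ⟨ψ₀, hψ₀, hψ₀E, hψ₀ρ⟩ := h
  obtain ⟨φ₀, hφ₀, hφ₀E, hφ₀ρ⟩ := h'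
  have hE : energy ι W v' - energy ι W v = ρ v' - ρ v := by
    have hle := energy_le_energy_add_of_ground_state ι W v' hψ₀ hψ₀E
    have hge := energy_le_energy_add_of_ground_state ι W v hφ₀ hφ₀E
    rw [hψ₀ρ] at hle
    rw [hφ₀ρ] at hge
    linarith
  refine ⟨fun ψ _ hψE hψρ => ?_, fun ψ _ hψE hψρ => ?_⟩
  · rw [expectation_potential_add_eq ι W v v', hψE, hψρ]
    linarith
  · rw [expectation_potential_add_eq ι W v' v, hψE, hψρ]
    linarith

/-- the weak Hohenberg–Kohn theorem. -/
theorem weak_hohenberg_kohn [FiniteDimensional ℝ V] [FiniteDimensional ℂ H] [Nontrivial H]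
    (ι : V →ₗ[ℝ] (H →ₗ[ℂ] H)) (W : H →ₗ[ℂ] H)
    (hι : ∀ v : V, (ι v).IsSymmetric) (hW : W.IsSymmetric)
    (v v' : V) (ρ : Module.Dual ℝ V)
    (h : ∃ ψ : H, ‖ψ‖ = 1 ∧ expectation (ι v + W) ψ = energy ι W v ∧ pureDensity ι ψ = ρ)
    (h' : ∃ ψ : H, ‖ψ‖ = 1 ∧ expectation (ι v' + W) ψ = energy ι W v' ∧ pureDensity ι ψ = ρ) :
    (∀ ψ : H, ‖ψ‖ = 1 → expectation (ι v + W) ψ = energy ι W v → pureDensity ι ψ = ρ →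
      expectation (ι v' + W) ψ = energy ι W v') ∧
    (∀ ψ : H, ‖ψ‖ = 1 → expectation (ι v' + W) ψ = energy ι W v' → pureDensity ι ψ = ρ →
      expectation (ι v + W) ψ = energy ι W v) :=
  weak_hohenberg_kohn_general ι W v v' ρ h h'

end
end

section
/- The ensemble functional F_e is convex on its domain: for all ρ₁, ρ₂ ∈ ι*(E) and t ∈ [0,1], one has t ρ₁ + (1−t) ρ₂ ∈ ι*(E) and F_e(t ρ₁ + (1−t) ρ₂) ≤ t F_e(ρ₁) + (1−t) F_e(ρ₂). -/
open Filter Topology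

noncomputable section

variable {V H : Type*}
  [AddCommGroup V] [Module ℝ V]
  [NormedAddCommGroup H] [InnerProductSpace ℂ H]

/-! Both the density `ι*(Γ)` and the energy `Re Tr(W Γ)` are real-linear in `Γ`, and ensemble
states form a convex set, so mixing (near-)minimisers `Γ₁`, `Γ₂` for `ρ₁`, `ρ₂` with weights
`t`, `1 - t` gives a competitor for `t ρ₁ + (1 - t) ρ₂` of energy `t F_e(ρ₁) + (1 - t) F_e(ρ₂) + ε`.
This is the convexity of any infimum of a linear functional over the fibres of a linear map on a
convex set; the infima are genuine (not the junk `sInf` of an unbounded set) because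
`Re Tr(W Γ) ≥ -‖W‖` on states, by the spectral decomposition of `Γ`. -/

section ConvexInfimalProjection

variable {E F : Type*} [AddCommGroup E] [Module ℝ E] [AddCommGroup F] [Module ℝ F]

theorem convexOn_sInf_image_fiber {S : Set E} (hS : Convex ℝ S) (f : E →ₗ[ℝ] F)
    (g : E →ₗ[ℝ] ℝ) (hg : BddBelow (g '' S)) :
    ConvexOn ℝ (f '' S) fun y => sInf (g '' {x ∈ S | f x = y}) := by
  refine ⟨hS.linear_image f, ?_⟩
  rintro _ ⟨x₁, hx₁, rfl⟩ _ ⟨x₂, hx₂, rfl⟩ a b ha hb hab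
  refine le_of_forall_pos_le_add fun ε hε => ?_
  obtain ⟨_, ⟨y₁, hy₁, rfl⟩, hg₁⟩ := Real.lt_sInf_add_pos
    (s := g '' {x ∈ S | f x = f x₁}) ⟨_, x₁, ⟨hx₁, rfl⟩, rfl⟩ hε
  obtain ⟨_, ⟨y₂, hy₂, rfl⟩, hg₂⟩ := Real.lt_sInf_add_pos
    (s := g '' {x ∈ S | f x = f x₂}) ⟨_, x₂, ⟨hx₂, rfl⟩, rfl⟩ hε
  have hmem : a • y₁ + b • y₂ ∈ {x ∈ S | f x = a • f x₁ + b • f x₂} :=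
    ⟨hS hy₁.1 hy₂.1 ha hb hab, by simp [hy₁.2, hy₂.2]⟩
  set m₁ := sInf (g '' {x ∈ S | f x = f x₁})
  set m₂ := sInf (g '' {x ∈ S | f x = f x₂})
  calc sInf (g '' {x ∈ S | f x = a • f x₁ + b • f x₂})
      ≤ g (a • y₁ + b • y₂) :=
        csInf_le (hg.mono (Set.image_mono (Set.sep_subset _ _))) (Set.mem_image_of_mem g hmem)
    _ = a * g y₁ + b * g y₂ := by simp
    _ ≤ a * (m₁ + ε) + b * (m₂ + ε) := by gcongr
    _ = a • m₁ + b • m₂ + ε := by simp only [smul_eq_mul]; linear_combination ε * hab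

end ConvexInfimalProjection

section Trace

variable {𝕜 E : Type*} [RCLike 𝕜] [NormedAddCommGroup E] [InnerProductSpace 𝕜 E]

open RCLike

theorem ContinuousLinearMap.neg_opNorm_le_re_inner_apply (A : E →L[𝕜] E) {x : E}
    (hx : ‖x‖ = 1) : -‖A‖ ≤ re (inner 𝕜 x (A x)) := by
  have h := re_inner_le_norm (𝕜 := 𝕜) x (-A x)
  rw [inner_neg_right, map_neg, norm_neg, hx, one_mul] at h
  have := A.le_opNorm x
  rw [hx, mul_one] at this
  linarith

variable [FiniteDimensional 𝕜 E]

theorem LinearMap.IsSymmetric.re_trace_comp_eq_sum {T : E →ₗ[𝕜] E} (hT : T.IsSymmetric)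
    (A : E →ₗ[𝕜] E) {n : ℕ} (hn : Module.finrank 𝕜 E = n) :
    re (LinearMap.trace 𝕜 E (A ∘ₗ T)) = ∑ i, hT.eigenvalues hn i *
      re (inner 𝕜 (hT.eigenvectorBasis hn i) (A (hT.eigenvectorBasis hn i))) := by
  rw [LinearMap.trace_eq_sum_inner _ (hT.eigenvectorBasis hn), map_sum]
  refine Finset.sum_congr rfl fun i _ => ?_
  rw [LinearMap.comp_apply, hT.apply_eigenvectorBasis, map_smul, inner_smul_right,
    re_ofReal_mul]

theorem LinearMap.IsPositive.neg_opNorm_mul_re_trace_le {T : E →ₗ[𝕜] E} (hT : T.IsPositive)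
    (A : E →ₗ[𝕜] E) :
    -(‖A.toContinuousLinearMap‖ * re (LinearMap.trace 𝕜 E T)) ≤
      re (LinearMap.trace 𝕜 E (A ∘ₗ T)) := by
  rw [hT.isSymmetric.re_trace_comp_eq_sum A rfl, hT.isSymmetric.re_trace_eq_sum_eigenvalues rfl,
    Finset.mul_sum, ← Finset.sum_neg_distrib]
  refine Finset.sum_le_sum fun i _ => ?_
  have hA := A.toContinuousLinearMap.neg_opNorm_le_re_inner_apply
    ((hT.isSymmetric.eigenvectorBasis rfl).orthonormal.1 i)
  rw [LinearMap.coe_toContinuousLinearMap'] at hA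
  nlinarith [hT.nonneg_eigenvalues rfl i]

end Trace

section EnsembleStates

def stateExpectation (A : H →ₗ[ℂ] H) : (H →ₗ[ℂ] H) →ₗ[ℝ] ℝ :=
  Complex.reLm ∘ₗ (LinearMap.trace ℂ H ∘ₗ LinearMap.mulLeft ℂ A).restrictScalars ℝ

theorem stateExpectation_apply (A Γ : H →ₗ[ℂ] H) :
    stateExpectation A Γ = (LinearMap.trace ℂ H (A ∘ₗ Γ)).re := rfl

theorem isEnsembleState_iff {Γ : H →ₗ[ℂ] H} :
    IsEnsembleState Γ ↔ Γ.IsPositive ∧ LinearMap.trace ℂ H Γ = 1 := by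
  constructor
  · rintro ⟨hs, hpos, htr⟩
    exact ⟨⟨hs, fun x => hs x x ▸ hpos x⟩, htr⟩
  · rintro ⟨hΓ, htr⟩
    exact ⟨hΓ.isSymmetric, hΓ.re_inner_nonneg_right, htr⟩

theorem convex_setOf_isEnsembleState : Convex ℝ {Γ : H →ₗ[ℂ] H | IsEnsembleState Γ} := by
  intro Γ₁ (h₁ : IsEnsembleState Γ₁) Γ₂ (h₂ : IsEnsembleState Γ₂) a b ha hb hab
  show IsEnsembleState _
  rw [isEnsembleState_iff] at h₁ h₂ ⊢
  constructor
  · rw [← Complex.coe_smul a Γ₁, ← Complex.coe_smul b Γ₂]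
    exact (h₁.1.smul_of_nonneg (by exact_mod_cast ha)).add
      (h₂.1.smul_of_nonneg (by exact_mod_cast hb))
  · rw [map_add, LinearMap.map_smul_of_tower, LinearMap.map_smul_of_tower, h₁.2, h₂.2,
      ← add_smul, hab, one_smul]

theorem bddBelow_stateExpectation_image [FiniteDimensional ℂ H] (A : H →ₗ[ℂ] H) :
    BddBelow (stateExpectation A '' {Γ | IsEnsembleState Γ}) := by
  refine ⟨-‖A.toContinuousLinearMap‖, ?_⟩
  rintro _ ⟨Γ, hΓ : IsEnsembleState Γ, rfl⟩
  rw [isEnsembleState_iff] at hΓ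
  simpa [hΓ.2, stateExpectation_apply] using hΓ.1.neg_opNorm_mul_re_trace_le A

def traceDensityₗ (ι : V →ₗ[ℝ] (H →ₗ[ℂ] H)) : (H →ₗ[ℂ] H) →ₗ[ℝ] Module.Dual ℝ V where
  toFun := traceDensity ι
  map_add' Γ₁ Γ₂ := LinearMap.ext fun v => map_add (stateExpectation (ι v)) Γ₁ Γ₂
  map_smul' c Γ := LinearMap.ext fun v => map_smul (stateExpectation (ι v)) c Γ

theorem traceDensityₗ_apply (ι : V →ₗ[ℝ] (H →ₗ[ℂ] H)) (Γ : H →ₗ[ℂ] H) :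
    traceDensityₗ ι Γ = traceDensity ι Γ := rfl

theorem mem_image_traceDensityₗ {ι : V →ₗ[ℝ] (H →ₗ[ℂ] H)} {ρ : Module.Dual ℝ V} :
    ρ ∈ traceDensityₗ ι '' {Γ | IsEnsembleState Γ} ↔
      ∃ Γ : H →ₗ[ℂ] H, IsEnsembleState Γ ∧ traceDensity ι Γ = ρ := by
  simp only [Set.mem_image, Set.mem_ofPred_eq, traceDensityₗ_apply]

theorem Fe_eq_sInf_image (ι : V →ₗ[ℝ] (H →ₗ[ℂ] H)) (W : H →ₗ[ℂ] H) (ρ : Module.Dual ℝ V) :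
    Fe ι W ρ = sInf (stateExpectation W ''
      {Γ ∈ {Γ : H →ₗ[ℂ] H | IsEnsembleState Γ} | traceDensityₗ ι Γ = ρ}) := by
  unfold Fe
  congr 1
  ext r
  exact ⟨fun ⟨Γ, hΓ, hρ, hr⟩ => ⟨Γ, ⟨hΓ, hρ⟩, hr.symm⟩,
    fun ⟨Γ, ⟨hΓ, hρ⟩, hr⟩ => ⟨Γ, hΓ, hρ, hr.symm⟩⟩

end EnsembleStates

theorem Fe_convex_general [FiniteDimensional ℂ H]
    (ι : V →ₗ[ℝ] (H →ₗ[ℂ] H)) (W : H →ₗ[ℂ] H)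
    (ρ₁ ρ₂ : Module.Dual ℝ V)
    (h₁ : ∃ Γ : H →ₗ[ℂ] H, IsEnsembleState Γ ∧ traceDensity ι Γ = ρ₁)
    (h₂ : ∃ Γ : H →ₗ[ℂ] H, IsEnsembleState Γ ∧ traceDensity ι Γ = ρ₂)
    (t : ℝ) (ht₀ : 0 ≤ t) (ht₁ : t ≤ 1) :
    (∃ Γ : H →ₗ[ℂ] H, IsEnsembleState Γ ∧ traceDensity ι Γ = t • ρ₁ + (1 - t) • ρ₂) ∧
    Fe ι W (t • ρ₁ + (1 - t) • ρ₂) ≤ t * Fe ι W ρ₁ + (1 - t) * Fe ι W ρ₂ := by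
  obtain ⟨hdomain, hconvex⟩ := convexOn_sInf_image_fiber
    (convex_setOf_isEnsembleState (H := H)) (traceDensityₗ ι) (stateExpectation W)
    (bddBelow_stateExpectation_image W)
  rw [← mem_image_traceDensityₗ] at h₁ h₂
  refine ⟨mem_image_traceDensityₗ.1 (hdomain h₁ h₂ ht₀ (sub_nonneg.2 ht₁) (by ring)), ?_⟩
  simpa only [Fe_eq_sInf_image, smul_eq_mul] using
    hconvex h₁ h₂ ht₀ (sub_nonneg.2 ht₁) (by ring)

/-- convexity of the ensemble functional on its domain. -/
theorem Fe_convex [FiniteDimensional ℝ V] [FiniteDimensional ℂ H] [Nontrivial H]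
    (ι : V →ₗ[ℝ] (H →ₗ[ℂ] H)) (W : H →ₗ[ℂ] H)
    (hι : ∀ v : V, (ι v).IsSymmetric) (hW : W.IsSymmetric)
    (ρ₁ ρ₂ : Module.Dual ℝ V)
    (h₁ : ∃ Γ : H →ₗ[ℂ] H, IsEnsembleState Γ ∧ traceDensity ι Γ = ρ₁)
    (h₂ : ∃ Γ : H →ₗ[ℂ] H, IsEnsembleState Γ ∧ traceDensity ι Γ = ρ₂)
    (t : ℝ) (ht₀ : 0 ≤ t) (ht₁ : t ≤ 1) :
    (∃ Γ : H →ₗ[ℂ] H, IsEnsembleState Γ ∧ traceDensity ι Γ = t • ρ₁ + (1 - t) • ρ₂) ∧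
    Fe ι W (t • ρ₁ + (1 - t) • ρ₂) ≤ t * Fe ι W ρ₁ + (1 - t) * Fe ι W ρ₂ :=
  Fe_convex_general ι W ρ₁ ρ₂ h₁ h₂ t ht₀ ht₁

end
end

section
/- (Dimension of the set of ensemble-representable densities.) The affine span of ι*(E) in V* has dimension equal to dim V − dim { v ∈ V : ι(v) is a real scalar multiple of the identity operator on H }. In particular, the affine span of ι*(E) is all of V* if and only if ι is injective and no nonzero v ∈ V satisfies ι(v) ∈ ℝ·id_H. -/
open Filter Topology

noncomputable section

variable {V H : Type*}
  [AddCommGroup V] [Module ℝ V]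
  [NormedAddCommGroup H] [InnerProductSpace ℂ H]

/-! An ensemble state has unit trace, so every density takes the value `c` on a potential `v`
with `ι v = c • id`; hence all differences of densities annihilate `scalarPart ι`. Conversely,
differences of pure densities `ψ ↦ ⟨ψ, ι v ψ⟩` already cut out `scalarPart ι`: if all of them
vanish at `v`, the quadratic form of the self-adjoint operator `ι v` is constant on the unit
sphere, which forces `ι v` to be a real multiple of the identity. So the direction of the
affine span is exactly the annihilator of `scalarPart ι`, whose dimension is
`dim V - dim (scalarPart ι)`. -/

open InnerProductSpace

lemma expectation_smul (T : H →ₗ[ℂ] H) (a : ℂ) (x : H) :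
    expectation T (a • x) = ‖a‖ ^ 2 * expectation T x := by
  rw [expectation, expectation, map_smul, inner_smul_left, inner_smul_right, ← mul_assoc,
    Complex.conj_mul', ← Complex.ofReal_pow, Complex.re_ofReal_mul]

lemma eq_smul_id_of_expectation_eq {T : H →ₗ[ℂ] H} (hT : T.IsSymmetric) {c : ℝ}
    (h : ∀ ψ : H, ‖ψ‖ = 1 → expectation T ψ = c) : T = c • LinearMap.id := by
  have hquad : ∀ x : H, expectation T x = c * ‖x‖ ^ 2 := by
    intro x
    rcases eq_or_ne x 0 with rfl | hx
    · simp [expectation]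
    · have hunit := h _ (norm_smul_inv_norm (𝕜 := ℂ) hx)
      rw [expectation_smul, norm_inv, RCLike.norm_ofReal, abs_norm] at hunit
      rw [← hunit]
      field_simp
  -- `⟪T x, x⟫` is real because `T` is symmetric, and over `ℂ` these values determine `T`.
  rw [← ext_inner_map]
  intro x
  rw [← hT.coe_re_inner_apply_self, inner_re_symm]
  change ((expectation T x : ℝ) : ℂ) = _
  rw [hquad, LinearMap.smul_apply, LinearMap.id_apply, RCLike.real_smul_eq_coe_smul (K := ℂ),
    inner_smul_real_left, inner_self_eq_norm_sq_to_K]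
  simp

lemma isEnsembleState_rankOne_self [FiniteDimensional ℂ H] {ψ : H} (hψ : ‖ψ‖ = 1) :
    IsEnsembleState (rankOne ℂ ψ ψ : H →ₗ[ℂ] H) :=
  have hpos := (isPositive_rankOne_self (𝕜 := ℂ) ψ).toLinearMap
  ⟨hpos.isSymmetric, hpos.re_inner_nonneg_right, by simp [trace_rankOne, hψ]⟩

lemma traceDensity_rankOne_self [FiniteDimensional ℂ H] (ι : V →ₗ[ℝ] (H →ₗ[ℂ] H)) (ψ : H) :
    traceDensity ι (rankOne ℂ ψ ψ) = pureDensity ι ψ := by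
  have hcomp (T : H →ₗ[ℂ] H) : T ∘ₗ (rankOne ℂ ψ ψ : H →ₗ[ℂ] H) = rankOne ℂ (T ψ) ψ := by
    ext; simp
  ext v
  simp [traceDensity, pureDensity, expectation, hcomp, trace_rankOne]

lemma IsEnsembleState.traceDensity_apply_of_eq_smul_id {Γ : H →ₗ[ℂ] H} (hΓ : IsEnsembleState Γ)
    (ι : V →ₗ[ℝ] (H →ₗ[ℂ] H)) {v : V} {c : ℝ} (hv : ι v = c • LinearMap.id) :
    traceDensity ι Γ v = c := by
  change (LinearMap.trace ℂ H (ι v ∘ₗ Γ)).re = c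
  rw [hv, LinearMap.smul_comp, LinearMap.id_comp, LinearMap.map_smul_of_tower, hΓ.2.2]
  simp

def ensembleDensities (ι : V →ₗ[ℝ] (H →ₗ[ℂ] H)) : Set (Module.Dual ℝ V) :=
  {σ | ∃ Γ : H →ₗ[ℂ] H, IsEnsembleState Γ ∧ traceDensity ι Γ = σ}

section

variable (ι : V →ₗ[ℝ] (H →ₗ[ℂ] H))

lemma pureDensity_mem_ensembleDensities [FiniteDimensional ℂ H] {ψ : H} (hψ : ‖ψ‖ = 1) :
    pureDensity ι ψ ∈ ensembleDensities ι :=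
  ⟨_, isEnsembleState_rankOne_self hψ, traceDensity_rankOne_self ι ψ⟩

lemma vectorSpan_ensembleDensities_le :
    vectorSpan ℝ (ensembleDensities ι) ≤ (scalarPart ι).dualAnnihilator := by
  rw [vectorSpan_def, Submodule.span_le]
  rintro _ ⟨_, ⟨Γ₁, hΓ₁, rfl⟩, _, ⟨Γ₂, hΓ₂, rfl⟩, rfl⟩
  rw [SetLike.mem_coe, Submodule.mem_dualAnnihilator]
  rintro v ⟨c, hc⟩
  simp only [vsub_eq_sub, LinearMap.sub_apply, hΓ₁.traceDensity_apply_of_eq_smul_id ι hc,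
    hΓ₂.traceDensity_apply_of_eq_smul_id ι hc, sub_self]

lemma dualCoannihilator_vectorSpan_ensembleDensities_le [FiniteDimensional ℂ H] [Nontrivial H]
    (hι : ∀ v : V, (ι v).IsSymmetric) :
    (vectorSpan ℝ (ensembleDensities ι)).dualCoannihilator ≤ scalarPart ι := by
  intro v hv
  obtain ⟨ψ₀, hψ₀⟩ := exists_norm_eq H zero_le_one
  refine ⟨expectation (ι v) ψ₀, eq_smul_id_of_expectation_eq (hι v) fun ψ hψ => ?_⟩
  have := (Submodule.mem_dualCoannihilator _).1 hv _ <| vsub_mem_vectorSpan ℝ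
    (pureDensity_mem_ensembleDensities ι hψ) (pureDensity_mem_ensembleDensities ι hψ₀)
  rwa [vsub_eq_sub, LinearMap.sub_apply, sub_eq_zero] at this

theorem vectorSpan_ensembleDensities [FiniteDimensional ℝ V] [FiniteDimensional ℂ H]
    [Nontrivial H] (hι : ∀ v : V, (ι v).IsSymmetric) :
    vectorSpan ℝ (ensembleDensities ι) = (scalarPart ι).dualAnnihilator := by
  refine (vectorSpan_ensembleDensities_le ι).antisymm ?_
  rw [← Subspace.dualCoannihilator_dualAnnihilator_eq (W := vectorSpan ℝ _)]
  exact Submodule.dualAnnihilator_anti (dualCoannihilator_vectorSpan_ensembleDensities_le ι hι)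

lemma scalarPart_eq_bot_iff : scalarPart ι = ⊥ ↔
    Function.Injective ι ∧ ∀ v : V, v ≠ 0 → ¬∃ c : ℝ, ι v = c • (LinearMap.id : H →ₗ[ℂ] H) := by
  rw [Submodule.eq_bot_iff]
  refine ⟨fun h => ⟨?_, fun v hv hc => hv (h v hc)⟩,
    fun ⟨_, h⟩ v hv => by_contra fun h0 => h v h0 hv⟩
  rw [← LinearMap.ker_eq_bot, Submodule.eq_bot_iff]
  exact fun v hv => h v ⟨0, by rw [zero_smul, LinearMap.mem_ker.1 hv]⟩

end

theorem dim_ensemble_representable_general [FiniteDimensional ℝ V] [FiniteDimensional ℂ H] [Nontrivial H]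
    (ι : V →ₗ[ℝ] (H →ₗ[ℂ] H))
    (hι : ∀ v : V, (ι v).IsSymmetric) :
    Module.finrank ℝ (affineSpan ℝ {σ : Module.Dual ℝ V |
        ∃ Γ : H →ₗ[ℂ] H, IsEnsembleState Γ ∧ traceDensity ι Γ = σ}).direction
      = Module.finrank ℝ V - Module.finrank ℝ (scalarPart ι) ∧
    (affineSpan ℝ {σ : Module.Dual ℝ V |
        ∃ Γ : H →ₗ[ℂ] H, IsEnsembleState Γ ∧ traceDensity ι Γ = σ} = ⊤ ↔
      Function.Injective ι ∧
        ∀ v : V, v ≠ 0 → ¬∃ c : ℝ, ι v = c • (LinearMap.id : H →ₗ[ℂ] H)) := by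
  change Module.finrank ℝ (affineSpan ℝ (ensembleDensities ι)).direction = _ ∧
    (affineSpan ℝ (ensembleDensities ι) = ⊤ ↔ _)
  obtain ⟨ψ, hψ⟩ := exists_norm_eq H zero_le_one
  have hne : (affineSpan ℝ (ensembleDensities ι) : Set (Module.Dual ℝ V)).Nonempty :=
    ⟨_, subset_affineSpan ℝ _ (pureDensity_mem_ensembleDensities ι hψ)⟩
  rw [← scalarPart_eq_bot_iff, ← AffineSubspace.direction_eq_top_iff_of_nonempty hne,
    direction_affineSpan, vectorSpan_ensembleDensities ι hι, Submodule.dualAnnihilator_eq_top_iff]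
  have hdim := Subspace.finrank_add_finrank_dualAnnihilator_eq (scalarPart ι)
  exact ⟨by omega, Iff.rfl⟩

/-- dimension of the set of ensemble-representable densities. -/
theorem dim_ensemble_representable [FiniteDimensional ℝ V] [FiniteDimensional ℂ H] [Nontrivial H]
    (ι : V →ₗ[ℝ] (H →ₗ[ℂ] H)) (W : H →ₗ[ℂ] H)
    (hι : ∀ v : V, (ι v).IsSymmetric) (hW : W.IsSymmetric) :
    Module.finrank ℝ (affineSpan ℝ {σ : Module.Dual ℝ V |
        ∃ Γ : H →ₗ[ℂ] H, IsEnsembleState Γ ∧ traceDensity ι Γ = σ}).direction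
      = Module.finrank ℝ V - Module.finrank ℝ (scalarPart ι) ∧
    (affineSpan ℝ {σ : Module.Dual ℝ V |
        ∃ Γ : H →ₗ[ℂ] H, IsEnsembleState Γ ∧ traceDensity ι Γ = σ} = ⊤ ↔
      Function.Injective ι ∧
        ∀ v : V, v ≠ 0 → ¬∃ c : ℝ, ι v = c • (LinearMap.id : H →ₗ[ℂ] H)) :=
  dim_ensemble_representable_general ι hι

end
end

section
/- (Density of a superposition of strongly orthogonal states.) In an abelian functional theory, let Φ and Φ' be unit vectors in H that are strongly orthogonal, i.e., for every weight ω ∈ Ω the orthogonal projections of Φ and Φ' onto the weight space H_ω are orthogonal. Let x, y ∈ ℂ with |x|² + |y|² = 1 and set Ψ = xΦ + yΦ'. Then Ψ is a unit vector and ι*(|Ψ⟩⟨Ψ|) = |x|² ι*(|Φ⟩⟨Φ|) + |y|² ι*(|Φ'⟩⟨Φ'|). -/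
open Filter Topology

noncomputable section

variable {V H : Type*}
  [AddCommGroup V] [Module ℝ V]
  [NormedAddCommGroup H] [InnerProductSpace ℂ H]

/-!
Commuting self-adjoint operators are simultaneously diagonalisable, so `H` is the orthogonal
sum of the weight spaces `H_α`, and every `ι v` acts on `H_α` as the scalar `α v`. Hence
`⟪Φ, ι v Φ'⟫ = ∑ α, α v ⟪P_α Φ, P_α Φ'⟫` and `⟪Φ, Φ'⟫ = ∑ α, ⟪P_α Φ, P_α Φ'⟫` vanish for
strongly orthogonal `Φ, Φ'`, so all cross terms drop out of the norm and of the expectation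
values of `x • Φ + y • Φ'`.
-/

theorem OrthogonalFamily.inner_apply_eq_zero_of_inner_orthogonalProjectionOnto_eq_zero
    {𝕜 E ι : Type*} [RCLike 𝕜] [NormedAddCommGroup E] [InnerProductSpace 𝕜 E]
    {K : ι → Submodule 𝕜 E} [∀ i, CompleteSpace (K i)]
    (hK : OrthogonalFamily 𝕜 (fun i => K i) fun i => (K i).subtypeₗᵢ)
    (htop : ⨆ i, K i = ⊤) {T : E →ₗ[𝕜] E} {c : ι → 𝕜} (hT : ∀ i, ∀ ψ ∈ K i, T ψ = c i • ψ)
    {x y : E}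
    (hxy : ∀ i,
      inner 𝕜 ((K i).orthogonalProjectionOnto x) ((K i).orthogonalProjectionOnto y) = 0) :
    inner 𝕜 x (T y) = 0 := by
  have hy_mem : y ∈ ⨆ i, K i := htop ▸ Submodule.mem_top
  obtain ⟨s, hs⟩ := Submodule.exists_finset_of_mem_iSup K hy_mem
  have hy : ∑ i : s, (K i).starProjection y = y :=
    (hK.comp Subtype.val_injective).sum_projection_of_mem_iSup y (by rwa [iSup_subtype'] at hs)
  rw [← hy, map_sum, _root_.inner_sum]
  refine Finset.sum_eq_zero fun i _ => ?_
  rw [Submodule.starProjection_apply, hT i _ (Submodule.coe_mem _), inner_smul_right,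
    ← Submodule.inner_orthogonalProjectionOnto_eq_of_mem_right, hxy, mul_zero]

open Module.End in
theorem weightSpace_le_eigenspace (ι : V →ₗ[ℝ] (H →ₗ[ℂ] H)) (α : Module.Dual ℝ V) (v : V) :
    weightSpace ι α ≤ eigenspace (ι v) (α v) :=
  fun _ hψ => mem_eigenspace_iff.mpr (hψ v)

theorem orthogonalFamily_weightSpace {ι : V →ₗ[ℝ] (H →ₗ[ℂ] H)} (hι : ∀ v, (ι v).IsSymmetric) :
    OrthogonalFamily ℂ (fun α => weightSpace ι α) fun α => (weightSpace ι α).subtypeₗᵢ := by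
  refine OrthogonalFamily.of_pairwise fun α β hαβ => ?_
  obtain ⟨v, hv⟩ := DFunLike.ne_iff.mp hαβ
  exact ((hι v).orthogonalFamily_eigenspaces.isOrtho (by exact_mod_cast hv)).mono
    (weightSpace_le_eigenspace ι α v) (weightSpace_le_eigenspace ι β v)

open Module.End in
theorem iInf_eigenspace_le_weightSpace_pureDensity {ι : V →ₗ[ℝ] (H →ₗ[ℂ] H)}
    (hι : ∀ v, (ι v).IsSymmetric) {χ : V → ℂ} {ψ : H}
    (hψ : ψ ∈ ⨅ v, eigenspace (ι v) (χ v)) (hψ₁ : ‖ψ‖ = 1) :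
    ⨅ v, eigenspace (ι v) (χ v) ≤ weightSpace ι (pureDensity ι ψ) := by
  intro φ hφ v
  have hψv : ι v ψ = χ v • ψ := mem_eigenspace_iff.mp (Submodule.mem_iInf _ |>.mp hψ v)
  have hχ_real : ((χ v).re : ℂ) = χ v :=
    Complex.conj_eq_iff_re.mp <| (hι v).conj_eigenvalue_eq_self <|
      hasEigenvalue_of_hasEigenvector
        ⟨Submodule.mem_iInf _ |>.mp hψ v, norm_ne_zero_iff.mp (by simp [hψ₁])⟩
  have hdensity : pureDensity ι ψ v = (χ v).re := by
    simp [pureDensity, expectation, hψv, inner_self_eq_norm_sq_to_K, hψ₁]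
  rw [hdensity, hχ_real]
  exact mem_eigenspace_iff.mp (Submodule.mem_iInf _ |>.mp hφ v)

open Module.End in
theorem iSup_weightSpace_eq_top [FiniteDimensional ℂ H] {ι : V →ₗ[ℝ] (H →ₗ[ℂ] H)}
    (hι : ∀ v, (ι v).IsSymmetric) (habel : ∀ v w, ι v ∘ₗ ι w = ι w ∘ₗ ι v) :
    ⨆ α, weightSpace ι α = ⊤ := by
  have hcomm : Pairwise fun v w => Commute (ι v) (ι w) := fun v w _ => habel v w
  refine eq_top_iff.mpr <| (LinearMap.IsSymmetric.iSup_iInf_eq_top_of_commute hι hcomm).ge.trans <|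
    iSup_le fun χ => ?_
  set E := ⨅ v, eigenspace (ι v) (χ v)
  rcases eq_or_ne E ⊥ with h | h
  · exact h ▸ bot_le
  have := Submodule.nontrivial_iff_ne_bot.mpr h
  obtain ⟨ψ, hψ₁⟩ := exists_norm_eq E zero_le_one
  exact (iInf_eigenspace_le_weightSpace_pureDensity hι ψ.2 hψ₁).trans (le_iSup _ _)

theorem StronglyOrthogonal.inner_apply_eq_zero [FiniteDimensional ℂ H]
    {ι : V →ₗ[ℝ] (H →ₗ[ℂ] H)} (hι : ∀ v, (ι v).IsSymmetric)
    (habel : ∀ v w, ι v ∘ₗ ι w = ι w ∘ₗ ι v) {Φ Φ' : H}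
    (hSO : StronglyOrthogonal ι Φ Φ') {T : H →ₗ[ℂ] H} {c : Module.Dual ℝ V → ℂ}
    (hT : ∀ α, ∀ ψ ∈ weightSpace ι α, T ψ = c α • ψ) :
    inner ℂ Φ (T Φ') = 0 := by
  refine (orthogonalFamily_weightSpace hι)
    |>.inner_apply_eq_zero_of_inner_orthogonalProjectionOnto_eq_zero
      (iSup_weightSpace_eq_top hι habel) hT fun α => ?_
  rcases eq_or_ne (weightSpace ι α) ⊥ with h | h
  · have hzero : ((weightSpace ι α).orthogonalProjectionOnto Φ : H) = 0 :=
      (Submodule.mem_bot ℂ).mp (h ▸ Submodule.coe_mem _)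
    rw [Submodule.coe_inner, hzero, inner_zero_left]
  · exact hSO α h

theorem norm_smul_add_smul_sq {Φ Φ' : H} (hΦ : ‖Φ‖ = 1) (hΦ' : ‖Φ'‖ = 1)
    (h : inner ℂ Φ Φ' = 0) (x y : ℂ) :
    ‖x • Φ + y • Φ'‖ ^ 2 = ‖x‖ ^ 2 + ‖y‖ ^ 2 := by
  simp [@norm_add_sq ℂ, inner_smul_left, inner_smul_right, h, norm_smul, hΦ, hΦ']

theorem expectation_smul_add_smul {T : H →ₗ[ℂ] H} (hT : T.IsSymmetric) {Φ Φ' : H}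
    (h : inner ℂ Φ (T Φ') = 0) (x y : ℂ) :
    expectation T (x • Φ + y • Φ') =
      ‖x‖ ^ 2 * expectation T Φ + ‖y‖ ^ 2 * expectation T Φ' := by
  have h' : inner ℂ Φ' (T Φ) = 0 := by rw [← hT, ← inner_conj_symm, h, map_zero]
  simp only [expectation, map_add, map_smul, inner_add_left, inner_add_right, inner_smul_left,
    inner_smul_right, h, h', mul_zero, add_zero, zero_add, ← mul_assoc, Complex.mul_conj']
  norm_cast
  rw [Complex.add_re, Complex.re_ofReal_mul, Complex.re_ofReal_mul]

theorem strongly_orthogonal_superposition_density_general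
    [FiniteDimensional ℂ H]
    (ι : V →ₗ[ℝ] (H →ₗ[ℂ] H))
    (hι : ∀ v : V, (ι v).IsSymmetric)
    (habel : ∀ v w : V, ι v ∘ₗ ι w = ι w ∘ₗ ι v)
    (Φ Φ' : H) (hΦ : ‖Φ‖ = 1) (hΦ' : ‖Φ'‖ = 1)
    (hSO : StronglyOrthogonal ι Φ Φ')
    (x y : ℂ) (hxy : ‖x‖ ^ 2 + ‖y‖ ^ 2 = 1) :
    ‖x • Φ + y • Φ'‖ = 1 ∧
    pureDensity ι (x • Φ + y • Φ')
      = ‖x‖ ^ 2 • pureDensity ι Φ + ‖y‖ ^ 2 • pureDensity ι Φ' := by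
  have horth : inner ℂ Φ Φ' = 0 :=
    hSO.inner_apply_eq_zero hι habel (T := LinearMap.id) (c := 1) fun _ ψ _ =>
      (one_smul ℂ ψ).symm
  refine ⟨(pow_eq_one_iff_of_nonneg (norm_nonneg _) two_ne_zero).mp ?_, ?_⟩
  · rw [norm_smul_add_smul_sq hΦ hΦ' horth, hxy]
  · ext v
    exact expectation_smul_add_smul (hι v)
      (hSO.inner_apply_eq_zero hι habel (c := fun α => (α v : ℂ)) fun _ _ hψ => hψ v) x y

/-- density of a superposition of strongly orthogonal states. -/
theorem strongly_orthogonal_superposition_density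
    [FiniteDimensional ℝ V] [FiniteDimensional ℂ H] [Nontrivial H]
    (ι : V →ₗ[ℝ] (H →ₗ[ℂ] H)) (W : H →ₗ[ℂ] H)
    (hι : ∀ v : V, (ι v).IsSymmetric) (hW : W.IsSymmetric)
    (habel : ∀ v w : V, ι v ∘ₗ ι w = ι w ∘ₗ ι v)
    (Φ Φ' : H) (hΦ : ‖Φ‖ = 1) (hΦ' : ‖Φ'‖ = 1)
    (hSO : StronglyOrthogonal ι Φ Φ')
    (x y : ℂ) (hxy : ‖x‖ ^ 2 + ‖y‖ ^ 2 = 1) :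
    ‖x • Φ + y • Φ'‖ = 1 ∧
    pureDensity ι (x • Φ + y • Φ')
      = ‖x‖ ^ 2 • pureDensity ι Φ + ‖y‖ ^ 2 • pureDensity ι Φ' :=
  strongly_orthogonal_superposition_density_general ι hι habel Φ Φ' hΦ hΦ' hSO x y hxy

end
end
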